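/- arXiv:1405.7208 — 2 statements merged into one kernel-verified Lean document; each statement's English description precedes it below -/
import Mathlib

section
/- If κ is an infinite cardinal with cof([κ]^ℵ₀) = κ, then cof([κ⁺]^ℵ₀) = κ⁺, where κ⁺ is the cardinal successor of κ. -/
open Set Filter

universe u

/-- Least cardinality of a cofinal subset of a preorder. -/
noncomputable def poCof (α : Type u) [Preorder α] : Cardinal.{u} :=
  sInf { c | ∃ S : Set α, (∀ a : α, ∃ b ∈ S, a ≤ b) ∧ Cardinal.mk S = c }

/-- `cof([X]^ℵ₀)`: cofinality of the family of countably infinite subsets of `X`,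
ordered by inclusion. -/
noncomputable def ctblCof (X : Type u) : Cardinal.{u} :=
  poCof { A : Set X // A.Countable ∧ A.Infinite }

/-- The dominating number 𝔡. -/
noncomputable def dNum : Cardinal :=
  sInf { c | ∃ D : Set (ℕ → ℕ),
    (∀ f : ℕ → ℕ, ∃ g ∈ D, ∀ᶠ n in atTop, f n ≤ g n) ∧ Cardinal.mk D = c }

/-- The unbounding number 𝔟. -/
noncomputable def bNum : Cardinal :=
  sInf { c | ∃ B : Set (ℕ → ℕ),
    (∀ g : ℕ → ℕ, ∃ f ∈ B, ¬ ∀ᶠ n in atTop, f n ≤ g n) ∧ Cardinal.mk B = c }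

/-- An almost disjoint family on ℕ. -/
def AlmostDisjoint (𝒜 : Set (Set ℕ)) : Prop :=
  (∀ A ∈ 𝒜, A.Infinite) ∧ ∀ A ∈ 𝒜, ∀ B ∈ 𝒜, A ≠ B → (A ∩ B).Finite

/-- The underlying set of the Isbell–Mrówka space `Ψ(𝒜) = ℕ ∪ 𝒜`. -/
abbrev PsiSpace (𝒜 : Set (Set ℕ)) : Type := ℕ ⊕ ↥𝒜

/-- The Isbell–Mrówka topology: naturals are isolated, and basic neighborhoods
of `A ∈ 𝒜` are `{A} ∪ (A \ F)` for finite `F`. -/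
instance psiTop (𝒜 : Set (Set ℕ)) : TopologicalSpace (PsiSpace 𝒜) where
  IsOpen U := ∀ A : 𝒜, Sum.inr A ∈ U → { n : ℕ | n ∈ (A : Set ℕ) ∧ Sum.inl n ∉ U }.Finite
  isOpen_univ := by
    intro A _
    convert Set.finite_empty using 1
    ext n; simp
  isOpen_inter := by
    intro U V hU hV A hA
    apply ((hU A hA.1).union (hV A hA.2)).subset
    rintro n ⟨h1, h2⟩
    by_cases h : Sum.inl n ∈ U
    · exact Or.inr ⟨h1, fun hv => h2 ⟨h, hv⟩⟩
    · exact Or.inl ⟨h1, h⟩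
  isOpen_sUnion := by
    intro s hs A hA
    obtain ⟨t, ht, hAt⟩ := hA
    apply (hs t ht A hAt).subset
    rintro n ⟨h1, h2⟩
    exact ⟨h1, fun h => h2 ⟨t, ht, h⟩⟩

/-- `st(S, 𝒰) = ⋃ {U ∈ 𝒰 : U ∩ S ≠ ∅}`. -/
def starSet {X : Type*} (S : Set X) (𝒰 : Set (Set X)) : Set X :=
  ⋃₀ { U ∈ 𝒰 | (U ∩ S).Nonempty }

def StarMenger (X : Type*) [TopologicalSpace X] : Prop :=
  ∀ 𝒰 : ℕ → Set (Set X), (∀ n, ∀ U ∈ 𝒰 n, IsOpen U) → (∀ n, ⋃₀ 𝒰 n = univ) →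
    ∃ ℱ : ℕ → Set (Set X), (∀ n, ℱ n ⊆ 𝒰 n ∧ (ℱ n).Finite) ∧
      (⋃ n, starSet (⋃₀ ℱ n) (𝒰 n)) = univ

def StarHurewicz (X : Type*) [TopologicalSpace X] : Prop :=
  ∀ 𝒰 : ℕ → Set (Set X), (∀ n, ∀ U ∈ 𝒰 n, IsOpen U) → (∀ n, ⋃₀ 𝒰 n = univ) →
    ∃ ℱ : ℕ → Set (Set X), (∀ n, ℱ n ⊆ 𝒰 n ∧ (ℱ n).Finite) ∧
      ∀ x : X, ∀ᶠ n in atTop, x ∈ starSet (⋃₀ ℱ n) (𝒰 n)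

def StarRothberger (X : Type*) [TopologicalSpace X] : Prop :=
  ∀ 𝒰 : ℕ → Set (Set X), (∀ n, ∀ U ∈ 𝒰 n, IsOpen U) → (∀ n, ⋃₀ 𝒰 n = univ) →
    ∃ U : ℕ → Set X, (∀ n, U n ∈ 𝒰 n) ∧ (⋃ n, starSet (U n) (𝒰 n)) = univ

def StronglyStarMenger (X : Type*) [TopologicalSpace X] : Prop :=
  ∀ 𝒰 : ℕ → Set (Set X), (∀ n, ∀ U ∈ 𝒰 n, IsOpen U) → (∀ n, ⋃₀ 𝒰 n = univ) →
    ∃ F : ℕ → Set X, (∀ n, (F n).Finite) ∧ (⋃ n, starSet (F n) (𝒰 n)) = univ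

def StronglyStarHurewicz (X : Type*) [TopologicalSpace X] : Prop :=
  ∀ 𝒰 : ℕ → Set (Set X), (∀ n, ∀ U ∈ 𝒰 n, IsOpen U) → (∀ n, ⋃₀ 𝒰 n = univ) →
    ∃ F : ℕ → Set X, (∀ n, (F n).Finite) ∧
      ∀ x : X, ∀ᶠ n in atTop, x ∈ starSet (F n) (𝒰 n)

/-!
Countable subsets of the regular uncountable cardinal `κ⁺` are bounded, so `[κ⁺]^ℵ₀` is the
union of the `κ⁺` families `[α]^ℵ₀`, `α < κ⁺`. Since `|α| ≤ κ`, each of them has a cofinal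
subfamily of size `cof([κ]^ℵ₀) = κ`, giving `cof([κ⁺]^ℵ₀) ≤ κ⁺ · κ = κ⁺`. Conversely, a cofinal
family covers `κ⁺` by countable sets, so it has at least `κ⁺` members.
-/

open Cardinal

theorem poCof_eq_cof (α : Type u) [Preorder α] : poCof α = Order.cof α := by
  refine le_antisymm (Order.le_cof_iff.2 fun s hs => csInf_le' ⟨s, hs, rfl⟩) ?_
  obtain ⟨s, hs, -⟩ := Order.exists_cof_eq α
  exact le_csInf ⟨_, s, hs, rfl⟩ fun c ⟨t, ht, htc⟩ => htc ▸ Order.cof_le ht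

abbrev CountablyInfiniteSubsets (X : Type u) : Type u := {A : Set X // A.Countable ∧ A.Infinite}

def CountablyInfiniteSubsets.image {X Y : Type u} (f : X → Y) (hf : f.Injective)
    (A : CountablyInfiniteSubsets X) : CountablyInfiniteSubsets Y :=
  ⟨f '' A.1, A.2.1.image f, A.2.2.image hf.injOn⟩

theorem ctblCof_eq_cof (X : Type u) : ctblCof X = Order.cof (CountablyInfiniteSubsets X) :=
  poCof_eq_cof _

theorem ctblCof_le_of_embedding {Y Z : Type u} (f : Y ↪ Z) : ctblCof Y ≤ ctblCof Z := by
  rw [ctblCof_eq_cof, ctblCof_eq_cof]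
  obtain ⟨s, hs, hcard⟩ := Order.exists_cof_eq (CountablyInfiniteSubsets Z)
  let pullback : CountablyInfiniteSubsets Z → Set Y := fun B => f ⁻¹' B.1
  let t : Set (CountablyInfiniteSubsets Y) := Subtype.val ⁻¹' (pullback '' s)
  have hcofinal : IsCofinal t := by
    intro A
    obtain ⟨B, hB, hAB⟩ := hs (A.image f f.injective)
    have hsub : A.1 ⊆ f ⁻¹' B.1 := fun y hy => hAB ⟨y, hy, rfl⟩
    exact ⟨⟨f ⁻¹' B.1, B.2.1.preimage f.injective, A.2.2.mono hsub⟩, ⟨B, hB, rfl⟩, hsub⟩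
  calc Order.cof _ ≤ #t := Order.cof_le hcofinal
    _ ≤ #(pullback '' s) := mk_preimage_of_injective _ _ Subtype.val_injective
    _ ≤ #s := mk_image_le
    _ = _ := hcard

theorem ctblCof_le_of_mk_le {Y Z : Type u} (h : #Y ≤ #Z) : ctblCof Y ≤ ctblCof Z :=
  let ⟨f⟩ := h
  ctblCof_le_of_embedding f

theorem mk_le_ctblCof {X : Type u} (h : ℵ₀ < #X) : #X ≤ ctblCof X := by
  have : Infinite X := infinite_iff.2 h.le
  rw [ctblCof_eq_cof, Order.le_cof_iff]
  intro s hs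
  have hcover : ⋃ B : s, (B : CountablyInfiniteSubsets X).1 = Set.univ := by
    refine Set.eq_univ_of_forall fun x => ?_
    let f := Infinite.natEmbedding X
    obtain ⟨B, hB, hxB⟩ := hs ⟨insert x (Set.range f), (Set.countable_range f).insert x,
      (Set.infinite_range_of_injective f.injective).mono (Set.subset_insert _ _)⟩
    exact Set.mem_iUnion.2 ⟨⟨B, hB⟩, hxB (Set.mem_insert _ _)⟩
  have hle : #X ≤ #s * ℵ₀ := by
    calc #X = #(⋃ B : s, (B : CountablyInfiniteSubsets X).1) := by rw [hcover, mk_univ]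
      _ ≤ #s * ⨆ B : s, #(B : CountablyInfiniteSubsets X).1 := mk_iUnion_le _
      _ ≤ #s * ℵ₀ := by
        gcongr
        exact ciSup_le' fun B => mk_le_aleph0_iff.2 B.1.2.1.to_subtype
  by_contra! hlt
  exact (mul_lt_of_lt h.le hlt h).not_ge hle

theorem ctblCof_le_mk_mul {X ι : Type u} (s : ι → Set X)
    (hs : ∀ A : CountablyInfiniteSubsets X, ∃ i, A.1 ⊆ s i) {c : Cardinal.{u}}
    (hc : ∀ i, ctblCof (s i) ≤ c) : ctblCof X ≤ #ι * c := by
  simp only [ctblCof_eq_cof] at hc ⊢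
  choose t ht hcard using fun i => Order.exists_cof_eq (CountablyInfiniteSubsets (s i))
  let pushforward : ∀ i, CountablyInfiniteSubsets (s i) → CountablyInfiniteSubsets X :=
    fun i A => A.image Subtype.val Subtype.val_injective
  have hcofinal : IsCofinal (⋃ i, pushforward i '' t i) := by
    intro A
    obtain ⟨i, hi⟩ := hs A
    have hrange : A.1 ⊆ Set.range (Subtype.val : s i → X) := by rwa [Subtype.range_coe]
    obtain ⟨B, hB, hAB⟩ := ht i ⟨Subtype.val ⁻¹' A.1, A.2.1.preimage Subtype.val_injective,
      A.2.2.preimage hrange⟩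
    refine ⟨pushforward i B, Set.mem_iUnion.2 ⟨i, B, hB, rfl⟩, ?_⟩
    calc A.1 = Subtype.val '' (Subtype.val ⁻¹' A.1) :=
          (Set.image_preimage_eq_of_subset hrange).symm
      _ ⊆ (pushforward i B).1 := Set.image_mono hAB
  calc Order.cof _ ≤ #(⋃ i, pushforward i '' t i) := Order.cof_le hcofinal
    _ ≤ #ι * ⨆ i, #(pushforward i '' t i) := mk_iUnion_le _
    _ ≤ #ι * c := by
      gcongr
      exact ciSup_le' fun i => mk_image_le.trans ((hcard i).trans_le (hc i))

theorem ctblCof_le_mk_mul_of_aleph0_lt_cof {X : Type u} [LinearOrder X]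
    (hX : ℵ₀ < Order.cof X) {c : Cardinal.{u}} (hc : ∀ x : X, ctblCof (Set.Iio x) ≤ c) :
    ctblCof X ≤ #X * c := by
  refine ctblCof_le_mk_mul Set.Iio (fun A => ?_) hc
  have hA : ¬IsCofinal A.1 := fun hA =>
    ((Order.cof_le hA).trans (mk_le_aleph0_iff.2 A.2.1.to_subtype)).not_gt hX
  exact not_isCofinal_iff.1 hA

/-- fixed points of `κ ↦ cof([κ]^ℵ₀)` are preserved by cardinal successor. -/
theorem ctblCof_succ (κ : Cardinal.{0}) (hκ : Cardinal.aleph0 ≤ κ)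
    (h : ctblCof (Quotient.out κ) = κ) :
    ctblCof (Quotient.out (Order.succ κ : Cardinal.{0})) = Order.succ κ := by
  have hsucc : ℵ₀ < Order.succ κ := hκ.trans_lt (Order.lt_succ κ)
  have hcof : ℵ₀ < Order.cof (Order.succ κ).ord.ToType := by
    rwa [Ordinal.cof_toType, (isRegular_succ hκ).cof_ord]
  have hIio (x : (Order.succ κ).ord.ToType) : ctblCof (Set.Iio x) ≤ κ := by
    refine (ctblCof_le_of_mk_le ?_).trans_eq h
    simpa [Order.lt_succ_iff] using mk_Iio_lt x
  refine le_antisymm ?_ ((mk_le_ctblCof (by rwa [mk_out])).trans_eq' (mk_out _))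
  calc ctblCof (Order.succ κ).out ≤ ctblCof (Order.succ κ).ord.ToType :=
        ctblCof_le_of_mk_le (by simp)
    _ ≤ #(Order.succ κ).ord.ToType * κ := ctblCof_le_mk_mul_of_aleph0_lt_cof hcof hIio
    _ = Order.succ κ := by
      rw [mk_ord_toType, mul_eq_left hsucc.le (Order.le_succ κ) (aleph0_pos.trans_le hκ).ne']
end

section
/- Let 𝒜 ⊆ P(ℕ) be an almost disjoint family. Then Ψ(𝒜) is strongly star-Menger if and only if |𝒜| < 𝔡. -/
open Set Filter

universe u

/-!
If `|𝒜| < 𝔡`, pick for each `A ∈ 𝒜` and each `n` a member of the `n`-th cover containing `A`,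
and a point `p_A(n) ∈ A` inside it. No `g` dominates all the `p_A`, so every `A` has some `n` with
`p_A(n) ≤ g(n)`, and the finite sets `F_n = {0, …, max (g n) n}` witness strong star-Mengerness.

If `|𝒜| ≥ 𝔡`, index by `𝒜` a family `h_A` that dominates every function everywhere (a dominating
family closed under adding constants). Cover `Ψ(𝒜)` at stage `n` by the isolated points and the
tails `{A} ∪ {k ∈ A | k > h_A(n)}`. Only the tail of `A` contains `A`, so `A ∈ st(F_n, 𝒰_n)` forces
`h_A(n) ≤ b(n)`, where `b(n)` bounds the points `k` and the values `h_B(n)` of the `inl k`, `inr B`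
in `F_n`; choosing `h_A > b` everywhere gives an uncovered `A`.
-/

def IsDominating (D : Set (ℕ → ℕ)) : Prop :=
  ∀ f : ℕ → ℕ, ∃ g ∈ D, ∀ᶠ n in atTop, f n ≤ g n

lemma dNum_le_mk {D : Set (ℕ → ℕ)} (hD : IsDominating D) : dNum ≤ Cardinal.mk D :=
  csInf_le' ⟨D, hD, rfl⟩

lemma exists_isDominating_mk_eq_dNum : ∃ D, IsDominating D ∧ Cardinal.mk D = dNum :=
  csInf_mem (⟨_, univ, fun f => ⟨f, mem_univ f, .of_forall fun _ => le_rfl⟩, rfl⟩ :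
    Set.Nonempty {c | ∃ D, IsDominating D ∧ Cardinal.mk D = c})

lemma IsDominating.infinite {D : Set (ℕ → ℕ)} (hD : IsDominating D) : D.Infinite := by
  intro hfin
  obtain ⟨b, hb⟩ := hfin.bddAbove
  obtain ⟨g, hg, hbg⟩ := hD (b + 1)
  obtain ⟨n, hn⟩ := hbg.exists
  have : g n ≤ b n := hb hg n
  simp only [Pi.add_apply, Pi.one_apply] at hn
  omega

lemma exists_not_eventually_le_of_mk_lt_dNum {ι : Type} (p : ι → ℕ → ℕ)
    (h : Cardinal.mk ι < dNum) : ∃ g : ℕ → ℕ, ∀ i, ¬ ∀ᶠ n in atTop, g n ≤ p i n := by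
  by_contra! hdom
  have hrange : IsDominating (range p) := fun g =>
    let ⟨i, hi⟩ := hdom g
    ⟨p i, mem_range_self i, hi⟩
  exact ((dNum_le_mk hrange).trans Cardinal.mk_range_le).not_gt h

lemma exists_forall_lt_add_of_eventually_lt {f d : ℕ → ℕ} (h : ∀ᶠ n in atTop, f n < d n) :
    ∃ m, ∀ n, f n < d n + m := by
  obtain ⟨N, hN⟩ := eventually_atTop.mp h
  refine ⟨(Finset.range N).sup fun n => f n + 1, fun n => ?_⟩
  rcases lt_or_ge n N with hn | hn
  · have := Finset.le_sup (f := fun n => f n + 1) (Finset.mem_range.mpr hn)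
    omega
  · have := hN n hn
    omega

lemma exists_forall_lt_of_dNum_le {ι : Type} (h : dNum ≤ Cardinal.mk ι) :
    ∃ H : ι → ℕ → ℕ, ∀ f : ℕ → ℕ, ∃ i, ∀ n, f n < H i n := by
  obtain ⟨D, hD, hDcard⟩ := exists_isDominating_mk_eq_dNum
  have hD0 : Cardinal.aleph0 ≤ Cardinal.mk D := Cardinal.infinite_iff.mp hD.infinite.to_subtype
  have hcard : Cardinal.mk (D × ℕ) ≤ Cardinal.mk ι := by
    rw [Cardinal.mk_prod, Cardinal.lift_id, Cardinal.lift_id, Cardinal.mk_nat,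
      Cardinal.mul_aleph0_eq hD0, hDcard]
    exact h
  obtain ⟨e⟩ := hcard
  have : Nonempty (D × ℕ) := ⟨(⟨_, hD.infinite.nonempty.some_mem⟩, 0)⟩
  refine ⟨fun i n => (Function.invFun e i).1.1 n + (Function.invFun e i).2, fun f => ?_⟩
  obtain ⟨d, hd, hfd⟩ := hD fun n => f n + 1
  obtain ⟨m, hm⟩ := exists_forall_lt_add_of_eventually_lt hfd
  refine ⟨e (⟨d, hd⟩, m), fun n => ?_⟩
  dsimp only
  rw [Function.leftInverse_invFun e.injective]
  exact hm n

lemma mem_starSet_iff {X : Type*} {S : Set X} {𝒰 : Set (Set X)} {x : X} :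
    x ∈ starSet S 𝒰 ↔ ∃ U ∈ 𝒰, (U ∩ S).Nonempty ∧ x ∈ U := by
  simp [starSet, and_assoc]

namespace PsiSpace

variable {𝒜 : Set (Set ℕ)}

lemma exists_inl_mem_of_inr_mem {U : Set (PsiSpace 𝒜)} (hU : IsOpen U) {A : 𝒜}
    (hA : Sum.inr A ∈ U) (hinf : (A : Set ℕ).Infinite) : ∃ k ∈ (A : Set ℕ), Sum.inl k ∈ U := by
  obtain ⟨k, hkA, hkU⟩ := (hinf.sdiff (hU A hA)).nonempty
  exact ⟨k, hkA, not_not.mp fun h => hkU ⟨hkA, h⟩⟩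

lemma isOpen_singleton_inl (k : ℕ) : IsOpen ({Sum.inl k} : Set (PsiSpace 𝒜)) := by
  intro A hA
  simp at hA

def tail (A : 𝒜) (m : ℕ) : Set (PsiSpace 𝒜) :=
  insert (Sum.inr A) (Sum.inl '' {k | k ∈ (A : Set ℕ) ∧ m < k})

lemma inr_mem_tail {A B : 𝒜} {m : ℕ} : Sum.inr B ∈ tail A m ↔ B = A := by
  simp [tail]

lemma inl_mem_tail {A : 𝒜} {m k : ℕ} : Sum.inl k ∈ tail A m ↔ k ∈ (A : Set ℕ) ∧ m < k := by
  simp [tail]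

lemma isOpen_tail (A : 𝒜) (m : ℕ) : IsOpen (tail A m) := by
  intro B hB
  obtain rfl := inr_mem_tail.mp hB
  refine (finite_Iic m).subset fun k hk => ?_
  by_contra hkm
  exact hk.2 (inl_mem_tail.mpr ⟨hk.1, not_le.mp hkm⟩)

def tailCover (t : 𝒜 → ℕ) : Set (Set (PsiSpace 𝒜)) :=
  range (fun k => {Sum.inl k}) ∪ range fun A => tail A (t A)

lemma isOpen_of_mem_tailCover {t : 𝒜 → ℕ} {U : Set (PsiSpace 𝒜)} (hU : U ∈ tailCover t) :
    IsOpen U := by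
  rcases hU with ⟨k, rfl⟩ | ⟨A, rfl⟩
  exacts [isOpen_singleton_inl k, isOpen_tail A (t A)]

lemma sUnion_tailCover (t : 𝒜 → ℕ) : ⋃₀ tailCover t = univ := by
  refine eq_univ_of_forall fun x => ?_
  rcases x with k | A
  · exact ⟨{Sum.inl k}, Or.inl ⟨k, rfl⟩, rfl⟩
  · exact ⟨tail A (t A), Or.inr ⟨A, rfl⟩, inr_mem_tail.mpr rfl⟩

lemma exists_le_of_inr_mem_starSet_tailCover {t : 𝒜 → ℕ} {S : Set (PsiSpace 𝒜)} {A : 𝒜}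
    (h : Sum.inr A ∈ starSet S (tailCover t)) : ∃ y ∈ S, t A ≤ Sum.elim id t y := by
  obtain ⟨U, hU, ⟨y, hyU, hyS⟩, hAU⟩ := mem_starSet_iff.mp h
  rcases hU with ⟨k, rfl⟩ | ⟨B, rfl⟩
  · simp at hAU
  obtain rfl := inr_mem_tail.mp hAU
  refine ⟨y, hyS, ?_⟩
  rcases y with k | B
  · exact (inl_mem_tail.mp hyU).2.le
  · obtain rfl := inr_mem_tail.mp hyU
    exact le_rfl

end PsiSpace

open PsiSpace

theorem stronglyStarMenger_psiSpace_of_mk_lt_dNum {𝒜 : Set (Set ℕ)}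
    (hinf : ∀ A ∈ 𝒜, A.Infinite) (hlt : Cardinal.mk 𝒜 < dNum) :
    StronglyStarMenger (PsiSpace 𝒜) := by
  intro 𝒰 hopen hcov
  have hmem : ∀ n x, ∃ U ∈ 𝒰 n, x ∈ U := fun n x => (hcov n).ge (mem_univ x)
  choose U hU𝒰 hxU using hmem
  have hpoint : ∀ (A : 𝒜) n, ∃ k ∈ (A : Set ℕ), Sum.inl k ∈ U n (.inr A) := fun A n =>
    exists_inl_mem_of_inr_mem (hopen n _ (hU𝒰 n _)) (hxU n _) (hinf A A.2)
  choose p hpA hpU using hpoint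
  obtain ⟨g, hg⟩ := exists_not_eventually_le_of_mk_lt_dNum p hlt
  refine ⟨fun n => Sum.inl '' Iic (max (g n) n), fun n => (finite_Iic _).image _, ?_⟩
  refine eq_univ_of_forall fun x => mem_iUnion.mpr ?_
  rcases x with m | A
  · exact ⟨m, mem_starSet_iff.mpr ⟨U m (.inl m), hU𝒰 m _,
      ⟨_, hxU m _, m, mem_Iic.mpr (le_max_right _ _), rfl⟩, hxU m _⟩⟩
  · obtain ⟨n, hn⟩ := (not_eventually.mp (hg A)).exists
    exact ⟨n, mem_starSet_iff.mpr ⟨U n (.inr A), hU𝒰 n _,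
      ⟨_, hpU A n, p A n, mem_Iic.mpr (le_max_of_le_left (not_le.mp hn).le), rfl⟩, hxU n _⟩⟩

theorem mk_lt_dNum_of_stronglyStarMenger_psiSpace {𝒜 : Set (Set ℕ)}
    (h : StronglyStarMenger (PsiSpace 𝒜)) : Cardinal.mk 𝒜 < dNum := by
  by_contra! hle
  obtain ⟨H, hH⟩ := exists_forall_lt_of_dNum_le hle
  obtain ⟨F, hFfin, hFcov⟩ := h (fun n => tailCover fun A => H A n)
    (fun n _ => isOpen_of_mem_tailCover) (fun n => sUnion_tailCover _)
  have hbound : ∀ n, ∃ b, ∀ y ∈ F n, Sum.elim id (fun A => H A n) y ≤ b :=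
    fun n => ((hFfin n).image _).bddAbove.imp fun _ hb y hy => hb (mem_image_of_mem _ hy)
  choose b hb using hbound
  obtain ⟨A, hA⟩ := hH b
  obtain ⟨n, hn⟩ := mem_iUnion.mp (hFcov.ge (mem_univ (Sum.inr A)))
  obtain ⟨y, hyF, hAy⟩ := exists_le_of_inr_mem_starSet_tailCover hn
  exact (hA n).not_ge (hAy.trans (hb n y hyF))

/-- Bonanzinga–Matveev: `Ψ(𝒜)` is strongly star-Menger iff `|𝒜| < 𝔡`. -/
theorem stronglyStarMenger_psiSpace_iff (𝒜 : Set (Set ℕ)) (had : AlmostDisjoint 𝒜) :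
    StronglyStarMenger (PsiSpace 𝒜) ↔ Cardinal.mk ↥𝒜 < dNum :=
  ⟨mk_lt_dNum_of_stronglyStarMenger_psiSpace,
    stronglyStarMenger_psiSpace_of_mk_lt_dNum had.1⟩
end
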